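/- arXiv:0704.3035 — 7 statements merged into one kernel-verified Lean document; each statement's English description precedes it below -/
import Mathlib

section
/- Let h₁, h₂ > 0 with h₁ ≤ h₂, and ρ(P₁,P₂) = (1 + h₁P₁ + h₂P₂)/((1+P₁)(1+P₂)) on [0,P̄₁]×[0,P̄₂]. If h₁ < 1 and h₂ ≥ 1 + h₁P̄₁, then ρ attains its minimum over the box at (P̄₁, 0). -/
noncomputable def ρ (h₁ h₂ P₁ P₂ : ℝ) : ℝ :=
  (1 + h₁ * P₁ + h₂ * P₂) / ((1 + P₁) * (1 + P₂))

theorem stmt_4 (h₁ h₂ Pm₁ Pm₂ : ℝ) (hh₁ : 0 < h₁) (hh₂ : 0 < h₂) (h12 : h₁ ≤ h₂)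
    (hPm₁ : 0 < Pm₁) (hPm₂ : 0 < Pm₂)
    (hc₁ : h₁ < 1) (hc₂ : 1 + h₁ * Pm₁ ≤ h₂) :
    ∀ P₁ ∈ Set.Icc (0:ℝ) Pm₁, ∀ P₂ ∈ Set.Icc (0:ℝ) Pm₂,
      ρ h₁ h₂ Pm₁ 0 ≤ ρ h₁ h₂ P₁ P₂ := by
  rintro P₁ ⟨h1l, h1u⟩ P₂ ⟨h2l, h2u⟩
  unfold ρ
  have hp1 : (0:ℝ) < 1 + P₁ := by linarith
  have hp2 : (0:ℝ) < 1 + P₂ := by linarith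
  have hpm : (0:ℝ) < 1 + Pm₁ := by linarith
  rw [div_le_div_iff₀ (by positivity) (by positivity)]
  nlinarith [mul_nonneg (mul_nonneg (sub_nonneg.mpr h1u) h2l) (sub_nonneg.mpr hc₁.le),
    mul_nonneg h2l (sub_nonneg.mpr hc₂), mul_nonneg (sub_nonneg.mpr h1u) (sub_nonneg.mpr hc₁.le),
    mul_nonneg (mul_nonneg h2l hPm₁.le) (sub_nonneg.mpr hc₂),
    mul_nonneg (mul_nonneg h2l h1l) (sub_nonneg.mpr hc₂),
    mul_nonneg hPm₁.le (mul_nonneg (sub_nonneg.mpr h1u) (sub_nonneg.mpr hc₁.le))]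
end

section
/- Let h₁, h₂ > 0 with h₁ ≤ h₂ and ρ(P₁,P₂) = (1 + h₁P₁ + h₂P₂)/((1+P₁)(1+P₂)). If h₁ ≥ 1 and h₂ ≥ 1 + h₁P̄₁, then ρ(P₁,P₂) ≥ 1 = ρ(0,0) for all (P₁,P₂) ∈ [0,P̄₁]×[0,P̄₂]; i.e., the maximal secrecy sum rate is 0, attained at (0,0). -/
theorem stmt_5 (h₁ h₂ Pm₁ Pm₂ : ℝ) (hh₁ : 0 < h₁) (hh₂ : 0 < h₂) (h12 : h₁ ≤ h₂)
    (hPm₁ : 0 < Pm₁) (hPm₂ : 0 < Pm₂)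
    (hc₁ : 1 ≤ h₁) (hc₂ : 1 + h₁ * Pm₁ ≤ h₂) :
    (∀ P₁ ∈ Set.Icc (0:ℝ) Pm₁, ∀ P₂ ∈ Set.Icc (0:ℝ) Pm₂,
      1 ≤ ρ h₁ h₂ P₁ P₂) ∧ ρ h₁ h₂ 0 0 = 1 := by
  constructor
  · rintro P₁ ⟨hP₁0, hP₁⟩ P₂ ⟨hP₂0, hP₂⟩
    rw [ρ, le_div_iff₀ (by nlinarith)]
    nlinarith [mul_le_mul_of_nonneg_right hc₂ hP₂0, mul_le_mul_of_nonneg_left hP₁ hh₁.le,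
      mul_le_mul_of_nonneg_right hc₁ hP₁0, mul_nonneg hP₁0 hP₂0,
      mul_le_mul_of_nonneg_right (mul_le_mul_of_nonneg_left hP₁ hh₁.le) hP₂0,
      mul_le_mul_of_nonneg_right (mul_le_mul_of_nonneg_right hc₁ hP₁0) hP₂0]
  · simp [ρ]
end

section
/- Suppose h₁ ≤ h₂, P₁*, P₂* ∈ {0} ∪ {P̄₁}, {0} ∪ {P̄₂} respectively with P̄₁,P̄₂ > 0, and the optimality structure: Pⱼ* = P̄ⱼ if hⱼ < Φⱼ(P*) and Pⱼ* = 0 if hⱼ ≥ Φⱼ(P*), where Φⱼ(P) = (1+h₁P₁+h₂P₂)/(1+Pⱼ). Then P₁* = 0 implies P₂* = 0. -/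
noncomputable def Φ₁ (h₁ h₂ P₁ P₂ : ℝ) : ℝ :=
  (1 + h₁ * P₁ + h₂ * P₂) / (1 + P₁)

noncomputable def Φ₂ (h₁ h₂ P₁ P₂ : ℝ) : ℝ :=
  (1 + h₁ * P₁ + h₂ * P₂) / (1 + P₂)

theorem stmt_7 (h₁ h₂ Pm₁ Pm₂ P₁s P₂s : ℝ)
    (hh₁ : 0 < h₁) (hh₂ : 0 < h₂) (h12 : h₁ ≤ h₂)
    (hPm₁ : 0 < Pm₁) (hPm₂ : 0 < Pm₂)
    (hP₁s : P₁s = 0 ∨ P₁s = Pm₁) (hP₂s : P₂s = 0 ∨ P₂s = Pm₂)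
    (hopt₁ : h₁ < Φ₁ h₁ h₂ P₁s P₂s → P₁s = Pm₁)
    (hopt₁' : Φ₁ h₁ h₂ P₁s P₂s ≤ h₁ → P₁s = 0)
    (hopt₂ : h₂ < Φ₂ h₁ h₂ P₁s P₂s → P₂s = Pm₂)
    (hopt₂' : Φ₂ h₁ h₂ P₁s P₂s ≤ h₂ → P₂s = 0) :
    P₁s = 0 → P₂s = 0 := by
  intro h10
  rcases hP₂s with h20 | h2m
  · exact h20
  · exfalso
    subst h10 h2m
    -- From hopt₁ contrapositive: Φ₁ ≤ h₁
    have hne : (0:ℝ) ≠ Pm₁ := ne_of_lt hPm₁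
    have hΦ₁ : Φ₁ h₁ h₂ 0 P₂s ≤ h₁ := by
      by_contra hc
      exact hne (hopt₁ (lt_of_not_ge hc))
    have hΦ₁' : 1 + h₂ * P₂s ≤ h₁ := by
      have : Φ₁ h₁ h₂ 0 P₂s = 1 + h₂ * P₂s := by
        simp [Φ₁]
      linarith [this ▸ hΦ₁]
    -- From hopt₂' contrapositive: h₂ < Φ₂
    have hne2 : P₂s ≠ 0 := ne_of_gt hPm₂
    have hΦ₂ : h₂ < Φ₂ h₁ h₂ 0 P₂s := by
      by_contra hc
      exact hne2 (hopt₂' (le_of_not_gt hc))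
    have hΦ₂' : h₂ * (1 + P₂s) < 1 + h₂ * P₂s := by
      have hpos : (0:ℝ) < 1 + P₂s := by linarith
      have : Φ₂ h₁ h₂ 0 P₂s = (1 + h₂ * P₂s) / (1 + P₂s) := by
        simp [Φ₂]
      rw [this] at hΦ₂
      exact (lt_div_iff₀ hpos).mp hΦ₂
    nlinarith
end

section
/- Let h₁,h₂ > 0 and ψ(P₁,P₂) = ρ(P₁,P₂)/φ₂(P₂) = (1+h₁P₁+h₂P₂)/((1+P₁)(1+h₂P₂)). The partial derivative of ψ with respect to P₂ is negative for all P₁ > 0 and P₂ ≥ 0; equivalently, the function P₂ ↦ g(P₁) - g(h₁P₁/(1+h₂P₂)) is strictly increasing in P₂ for fixed P₁ > 0. -/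
noncomputable def g (x : ℝ) : ℝ := (1/2) * Real.log (1 + x)

noncomputable def ψ (h₁ h₂ P₁ P₂ : ℝ) : ℝ :=
  (1 + h₁ * P₁ + h₂ * P₂) / ((1 + P₁) * (1 + h₂ * P₂))

/-! Writing `a = 1 + h₁ P₁`, `ψ` is the Möbius map `t ↦ (a + h₂ t) / ((1 + P₁) (1 + h₂ t))`, whose
derivative has the sign of `h₂ (1 - a) < 0`. The second claim holds because `g` is increasing and
`h₁ P₁ / (1 + h₂ P₂)` is decreasing in `P₂`. -/

theorem hasDerivAt_ψ (h₁ h₂ P₁ P₂ : ℝ) (hP₁ : 1 + P₁ ≠ 0) (hP₂ : 1 + h₂ * P₂ ≠ 0) :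
    HasDerivAt (fun t => ψ h₁ h₂ P₁ t)
      (-(h₁ * h₂ * P₁) / ((1 + P₁) * (1 + h₂ * P₂) ^ 2)) P₂ := by
  have hnum : HasDerivAt (fun t : ℝ => 1 + h₁ * P₁ + h₂ * t) h₂ P₂ := by
    simpa using ((hasDerivAt_id P₂).const_mul h₂).const_add (1 + h₁ * P₁)
  have hden : HasDerivAt (fun t : ℝ => (1 + P₁) * (1 + h₂ * t)) ((1 + P₁) * h₂) P₂ := by
    simpa using (((hasDerivAt_id P₂).const_mul h₂).const_add 1).const_mul (1 + P₁)
  refine (hnum.div hden (mul_ne_zero hP₁ hP₂)).congr_deriv ?_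
  field_simp
  ring

theorem g_strictMonoOn : StrictMonoOn g (Set.Ioi (-1)) := by
  intro x hx y _ hxy
  have hlog := Real.log_lt_log (by linarith [Set.mem_Ioi.mp hx]) (by linarith : 1 + x < 1 + y)
  unfold g
  linarith

theorem strictAntiOn_div_one_add_mul {c h : ℝ} (hc : 0 < c) (hh : 0 < h) :
    StrictAntiOn (fun t => c / (1 + h * t)) (Set.Ici 0) := by
  intro a ha b _ hab
  have ha : 0 ≤ a := ha
  exact div_lt_div_of_pos_left hc (by positivity) (by nlinarith)

theorem stmt_9 (h₁ h₂ P₁ : ℝ) (hh₁ : 0 < h₁) (hh₂ : 0 < h₂) (hP₁ : 0 < P₁) :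
    (∀ P₂ : ℝ, 0 ≤ P₂ →
      HasDerivAt (fun t => ψ h₁ h₂ P₁ t)
        (-(h₁ * h₂ * P₁) / ((1 + P₁) * (1 + h₂ * P₂) ^ 2)) P₂ ∧
      -(h₁ * h₂ * P₁) / ((1 + P₁) * (1 + h₂ * P₂) ^ 2) < 0) ∧
    StrictMonoOn (fun P₂ => g P₁ - g (h₁ * P₁ / (1 + h₂ * P₂))) (Set.Ici 0) := by
  refine ⟨fun P₂ hP₂ => ?_, fun a ha b hb hab => ?_⟩
  · have hden : 0 < 1 + h₂ * P₂ := by positivity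
    refine ⟨hasDerivAt_ψ h₁ h₂ P₁ P₂ (by positivity) hden.ne', ?_⟩
    exact div_neg_of_neg_of_pos (neg_neg_of_pos (by positivity)) (by positivity)
  · have hdom : ∀ t ∈ Set.Ici (0 : ℝ), h₁ * P₁ / (1 + h₂ * t) ∈ Set.Ioi (-1) := fun t ht => by
      have ht : 0 ≤ t := ht
      have : 0 < h₁ * P₁ / (1 + h₂ * t) := by positivity
      simp only [Set.mem_Ioi]
      linarith
    have hlt := g_strictMonoOn (hdom b hb) (hdom a ha)
      (strictAntiOn_div_one_add_mul (by positivity) hh₂ ha hb hab)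
    dsimp only
    linarith
end

section
/- Let h₁,h₂ > 0 and P̄₁,P̄₂ > 0. If h₁ < 1 + h₂P̄₂, then the maximum over [0,P̄₁]×[0,P̄₂] of f(P₁,P₂) = g(P₁) - g(h₁P₁/(1+h₂P₂)), where g(x)=(1/2)log(1+x), is attained at (P̄₁, P̄₂) and is strictly positive. -/
noncomputable def f (h₁ h₂ P₁ P₂ : ℝ) : ℝ :=
  g P₁ - g (h₁ * P₁ / (1 + h₂ * P₂))

theorem stmt_10 (h₁ h₂ Pm₁ Pm₂ : ℝ) (hh₁ : 0 < h₁) (hh₂ : 0 < h₂)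
    (hPm₁ : 0 < Pm₁) (hPm₂ : 0 < Pm₂)
    (hc : h₁ < 1 + h₂ * Pm₂) :
    (∀ P₁ ∈ Set.Icc (0:ℝ) Pm₁, ∀ P₂ ∈ Set.Icc (0:ℝ) Pm₂,
      f h₁ h₂ P₁ P₂ ≤ f h₁ h₂ Pm₁ Pm₂) ∧ 0 < f h₁ h₂ Pm₁ Pm₂ := by
  have hd : (0:ℝ) < 1 + h₂ * Pm₂ := by nlinarith
  have hc1 : h₁ / (1 + h₂ * Pm₂) < 1 := (div_lt_one hd).mpr hc
  have hc0 : 0 ≤ h₁ / (1 + h₂ * Pm₂) := le_of_lt (div_pos hh₁ hd)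
  constructor
  · intro P₁ hP₁ P₂ hP₂
    obtain ⟨hP₁0, hP₁m⟩ := hP₁
    obtain ⟨hP₂0, hP₂m⟩ := hP₂
    have hd2 : (0:ℝ) < 1 + h₂ * P₂ := by nlinarith
    have step1 : f h₁ h₂ P₁ P₂ ≤ f h₁ h₂ P₁ Pm₂ := by
      unfold f g
      have hnum : 0 ≤ h₁ * P₁ := by positivity
      have hq : h₁ * P₁ / (1 + h₂ * Pm₂) ≤ h₁ * P₁ / (1 + h₂ * P₂) :=
        div_le_div_of_nonneg_left hnum hd2 (by nlinarith)
      have hpos : (0:ℝ) < 1 + h₁ * P₁ / (1 + h₂ * Pm₂) := by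
        have := div_nonneg hnum hd.le; linarith
      have hlog : Real.log (1 + h₁ * P₁ / (1 + h₂ * Pm₂)) ≤
          Real.log (1 + h₁ * P₁ / (1 + h₂ * P₂)) :=
        Real.log_le_log hpos (by linarith)
      linarith
    have step2 : f h₁ h₂ P₁ Pm₂ ≤ f h₁ h₂ Pm₁ Pm₂ := by
      unfold f g
      set c := h₁ / (1 + h₂ * Pm₂) with hcdef
      have e1 : h₁ * P₁ / (1 + h₂ * Pm₂) = c * P₁ := by
        rw [hcdef]; ring
      have e2 : h₁ * Pm₁ / (1 + h₂ * Pm₂) = c * Pm₁ := by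
        rw [hcdef]; ring
      rw [e1, e2]
      have hb1 : (0:ℝ) < 1 + c * P₁ := by nlinarith
      have hb2 : (0:ℝ) < 1 + c * Pm₁ := by nlinarith
      have ha1 : (0:ℝ) < 1 + P₁ := by linarith
      have ha2 : (0:ℝ) < 1 + Pm₁ := by linarith
      have hdiv : (1 + P₁) / (1 + c * P₁) ≤ (1 + Pm₁) / (1 + c * Pm₁) := by
        rw [div_le_div_iff₀ hb1 hb2]
        nlinarith [mul_nonneg hc0 (sub_nonneg.mpr hP₁m)]
      have hlog := Real.log_le_log (by positivity) hdiv
      rw [Real.log_div (ne_of_gt ha1) (ne_of_gt hb1),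
          Real.log_div (ne_of_gt ha2) (ne_of_gt hb2)] at hlog
      linarith
    linarith
  · unfold f g
    set c := h₁ / (1 + h₂ * Pm₂) with hcdef
    have e2 : h₁ * Pm₁ / (1 + h₂ * Pm₂) = c * Pm₁ := by rw [hcdef]; ring
    rw [e2]
    have hb2 : (0:ℝ) < 1 + c * Pm₁ := by nlinarith
    have hlt : 1 + c * Pm₁ < 1 + Pm₁ := by nlinarith
    have := Real.log_lt_log hb2 hlt
    linarith
end

section
/- Let h₁,h₂ > 0 and P̄₁,P̄₂ > 0. If h₁ ≥ 1 + h₂P̄₂, then g(P₁) - g(h₁P₁/(1+h₂P₂)) ≤ 0 for all (P₁,P₂) ∈ [0,P̄₁]×[0,P̄₂], with equality at (0,0); hence the optimal cooperative jamming allocation is (0,0). -/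
lemma g_monotoneOn : MonotoneOn g (Set.Ioi (-1)) := fun x hx _ _ hxy =>
  mul_le_mul_of_nonneg_left
    (Real.log_le_log (by linarith [Set.mem_Ioi.1 hx]) (by linarith)) (by norm_num)

lemma le_mul_div_of_le {a b x : ℝ} (hx : 0 ≤ x) (hb : 0 < b) (hba : b ≤ a) :
    x ≤ a * x / b := by
  rw [le_div_iff₀ hb, mul_comm a]
  exact mul_le_mul_of_nonneg_left hba hx

theorem stmt_11_general (h₁ h₂ Pm₁ Pm₂ : ℝ) (hh₂ : 0 < h₂)
    (hc : 1 + h₂ * Pm₂ ≤ h₁) :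
    (∀ P₁ ∈ Set.Icc (0:ℝ) Pm₁, ∀ P₂ ∈ Set.Icc (0:ℝ) Pm₂,
      g P₁ - g (h₁ * P₁ / (1 + h₂ * P₂)) ≤ 0) ∧
    g 0 - g (h₁ * 0 / (1 + h₂ * 0)) = 0 := by
  refine ⟨?_, by simp⟩
  rintro P₁ ⟨hP₁, -⟩ P₂ ⟨hP₂, hP₂m⟩
  have hjam : 0 ≤ h₂ * P₂ := mul_nonneg hh₂.le hP₂
  have hgain : 1 + h₂ * P₂ ≤ h₁ := le_trans (by gcongr) hc
  have hP₁_le : P₁ ≤ h₁ * P₁ / (1 + h₂ * P₂) := le_mul_div_of_le hP₁ (by linarith) hgain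
  refine sub_nonpos.2 (g_monotoneOn ?_ ?_ hP₁_le) <;> simp only [Set.mem_Ioi] <;> linarith

theorem stmt_11 (h₁ h₂ Pm₁ Pm₂ : ℝ) (hh₁ : 0 < h₁) (hh₂ : 0 < h₂)
    (hPm₁ : 0 < Pm₁) (hPm₂ : 0 < Pm₂)
    (hc : 1 + h₂ * Pm₂ ≤ h₁) :
    (∀ P₁ ∈ Set.Icc (0:ℝ) Pm₁, ∀ P₂ ∈ Set.Icc (0:ℝ) Pm₂,
      g P₁ - g (h₁ * P₁ / (1 + h₂ * P₂)) ≤ 0) ∧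
    g 0 - g (h₁ * 0 / (1 + h₂ * 0)) = 0 :=
  stmt_11_general h₁ h₂ Pm₁ Pm₂ hh₂ hc
end

section
/- Let W, X, Z be random variables on finite sets with W → X → Z a Markov chain, and suppose: (i) I(X;Z) ≤ nC, (ii) H(X|W) = nC, and (iii) H(X|W,Z) ≤ nε. Then H(W|Z) ≥ H(W) - nε. -/
open Finset

section
variable {W X Z : Type*} [Fintype W] [Fintype X] [Fintype Z]

noncomputable def Hwxz (p : W → X → Z → ℝ) : ℝ :=
  ∑ w, ∑ x, ∑ z, Real.negMulLog (p w x z)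

noncomputable def Hw (p : W → X → Z → ℝ) : ℝ :=
  ∑ w, Real.negMulLog (∑ x, ∑ z, p w x z)

noncomputable def Hx (p : W → X → Z → ℝ) : ℝ :=
  ∑ x, Real.negMulLog (∑ w, ∑ z, p w x z)

noncomputable def Hz (p : W → X → Z → ℝ) : ℝ :=
  ∑ z, Real.negMulLog (∑ w, ∑ x, p w x z)

noncomputable def Hwx (p : W → X → Z → ℝ) : ℝ :=
  ∑ w, ∑ x, Real.negMulLog (∑ z, p w x z)

noncomputable def Hwz (p : W → X → Z → ℝ) : ℝ :=
  ∑ w, ∑ z, Real.negMulLog (∑ x, p w x z)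

noncomputable def Hxz (p : W → X → Z → ℝ) : ℝ :=
  ∑ x, ∑ z, Real.negMulLog (∑ w, p w x z)

/-- Conditional entropy H(W|Z). -/
noncomputable def HwGz (p : W → X → Z → ℝ) : ℝ := Hwz p - Hz p

/-- Conditional entropy H(X|W). -/
noncomputable def HxGw (p : W → X → Z → ℝ) : ℝ := Hwx p - Hw p

/-- Conditional entropy H(X|W,Z). -/
noncomputable def HxGwz (p : W → X → Z → ℝ) : ℝ := Hwxz p - Hwz p

/-- Mutual information I(X;Z). -/
noncomputable def Ixz (p : W → X → Z → ℝ) : ℝ := Hx p + Hz p - Hxz p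

end

section
variable {W X Z : Type*} [Fintype W] [Fintype X] [Fintype Z]

/-- Conditional mutual information I(X;Z|W). -/
noncomputable def IxzGw (p : W → X → Z → ℝ) : ℝ := HxGw p - HxGwz p

/-- `hMarkov` is `H(Z|W,X) = H(Z|X)`, the entropic form of the Markov chain `W → X → Z`. -/
theorem HwGz_eq_of_markov (p : W → X → Z → ℝ) (hMarkov : Hwxz p - Hwx p = Hxz p - Hx p) :
    HwGz p = Hw p - Ixz p + IxzGw p := by
  simp only [HwGz, Ixz, IxzGw, HxGw, HxGwz]
  linarith

end

theorem stmt_16_general {W X Z : Type*} [Fintype W] [Fintype X] [Fintype Z]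
    (p : W → X → Z → ℝ)
    (hMarkov : Hwxz p - Hwx p = Hxz p - Hx p)
    (n C ε : ℝ)
    (hIxz : Ixz p ≤ n * C)
    (hHxGw : HxGw p = n * C)
    (hHxGwz : HxGwz p ≤ n * ε) :
    Hw p - n * ε ≤ HwGz p := by
  have hIxzGw : n * C - n * ε ≤ IxzGw p := by
    rw [IxzGw, hHxGw]
    linarith
  rw [HwGz_eq_of_markov p hMarkov]
  linarith

theorem stmt_16 {W X Z : Type*} [Fintype W] [Fintype X] [Fintype Z]
    (p : W → X → Z → ℝ) (hpos : ∀ w x z, 0 ≤ p w x z)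
    (hsum : ∑ w, ∑ x, ∑ z, p w x z = 1)
    (hMarkov : Hwxz p - Hwx p = Hxz p - Hx p)
    (n C ε : ℝ) (hn : 0 < n) (hC : 0 ≤ C) (hε : 0 ≤ ε)
    (hIxz : Ixz p ≤ n * C)
    (hHxGw : HxGw p = n * C)
    (hHxGwz : HxGwz p ≤ n * ε) :
    Hw p - n * ε ≤ HwGz p :=
  stmt_16_general p hMarkov n C ε hIxz hHxGw hHxGwz
end
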